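/- Theorem (nesting of optimal volumes; graph-theoretic form of the paper's Theorem 2.6). Let r be an order with levels on X and let (τ, ω) and (τ′, ω′) be persistence pairs of r with (τ, ω) ≠ (τ′, ω′). Then one of the following three alternatives holds for the optimal volumes: K_V(G(≻_r τ), ω) ∩ K_V(G(≻_r τ′), ω′) = ∅, or K_V(G(≻_r τ), ω) ⊊ K_V(G(≻_r τ′), ω′), or K_V(G(≻_r τ), ω) ⊋ K_V(G(≻_r τ′), ω′). -/

import Mathlib

open scoped Classical

namespace StableVol

/-- A finite abstract simplicial complex of dimension `n`: a finite family of nonempty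
finite subsets of the vertex set, closed under nonempty subsets, in which every element
is contained in an element of cardinality `n+1`. -/
structure NComplex (V : Type*) [DecidableEq V] (n : ℕ) where
  X : Finset (Finset V)
  nonempty_mem : ∀ σ ∈ X, σ.Nonempty
  down_closed : ∀ σ ∈ X, ∀ σ' : Finset V, σ' ⊆ σ → σ'.Nonempty → σ' ∈ X
  contained_top : ∀ σ ∈ X, ∃ ω ∈ X, σ ⊆ ω ∧ ω.card = n + 1

variable {V : Type*} [DecidableEq V] {n : ℕ}

/-- An `n`-cell is either an `n`-simplex (`some ω`) or the formal cell `ω∞` (`none`). -/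
abbrev Cell (V : Type*) := Option (Finset V)

/-- `τ` is a face of the cell `c`.  For `c = some ω` this means that `ω` is an
`n`-simplex of `X` containing `τ`; the faces of `ω∞ = none` are the `(n-1)`-simplices
having exactly one `n`-simplex coface. -/
def faceCell (C : NComplex V n) (τ : Finset V) : Cell V → Prop
  | some ω => ω ∈ C.X ∧ ω.card = n + 1 ∧ τ ⊆ ω
  | none => {ω | ω ∈ C.X ∧ ω.card = n + 1 ∧ τ ⊆ ω}.ncard = 1

def IsCell (C : NComplex V n) : Cell V → Prop
  | some ω => ω ∈ C.X ∧ ω.card = n + 1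
  | none => True

/-- Adjacency in the dual graph, restricted to the edge set `E ⊆ X^(n-1)`. -/
def adj (C : NComplex V n) (E : Set (Finset V)) (c c' : Cell V) : Prop :=
  ∃ τ ∈ E, faceCell C τ c ∧ faceCell C τ c' ∧ c ≠ c'

/-- `KV C E c₀`: the set of `n`-cells in the connected component of `c₀` in the
subgraph of the dual graph with edge set `E`. -/
def KV (C : NComplex V n) (E : Set (Finset V)) (c₀ : Cell V) : Set (Cell V) :=
  {c | Relation.ReflTransGen (adj C E) c₀ c}

/-- Every `(n-1)`-simplex of `X` is a face of exactly two `n`-cells. -/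
def TwoCofaces (C : NComplex V n) : Prop :=
  ∀ τ ∈ C.X, τ.card = n →
    ∃ c₁ c₂ : Cell V, c₁ ≠ c₂ ∧ ∀ c : Cell V, faceCell C τ c ↔ (c = c₁ ∨ c = c₂)

/-- The dual graph (with full edge set `X^(n-1)`) is connected. -/
def DualConn (C : NComplex V n) : Prop :=
  ∀ c c' : Cell V, IsCell C c → IsCell C c' →
    c' ∈ KV C {τ | τ ∈ C.X ∧ τ.card = n} c

/-- A level function: monotone with respect to strict inclusion of simplices. -/
def IsLevelFun (C : NComplex V n) (lev : Finset V → ℝ) : Prop :=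
  ∀ σ ∈ C.X, ∀ σ' ∈ C.X, σ ⊂ σ' → lev σ ≤ lev σ'

/-- `(lev, slt)` is an order with levels on `X`: `lev` is a level function and `slt`
is (the strict form of) a linear order on `X` refining both `lev` and strict
inclusion. -/
def IsOWL (C : NComplex V n) (lev : Finset V → ℝ)
    (slt : Finset V → Finset V → Prop) : Prop :=
  IsLevelFun C lev ∧
  (∀ σ ∈ C.X, ¬ slt σ σ) ∧
  (∀ σ ∈ C.X, ∀ σ' ∈ C.X, ∀ σ'' ∈ C.X, slt σ σ' → slt σ' σ'' → slt σ σ'') ∧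
  (∀ σ ∈ C.X, ∀ σ' ∈ C.X, σ ≠ σ' → slt σ σ' ∨ slt σ' σ) ∧
  (∀ σ ∈ C.X, ∀ σ' ∈ C.X, slt σ σ' → lev σ ≤ lev σ') ∧
  (∀ σ ∈ C.X, ∀ σ' ∈ C.X, σ ⊂ σ' → slt σ σ')

/-- Extension of a strict order on simplices to `n`-cells, `ω∞ = none` being the
unique maximum. -/
def cslt (slt : Finset V → Finset V → Prop) : Cell V → Cell V → Prop
  | some σ, some σ' => slt σ σ'
  | some _, none => True
  | none, _ => False

/-- `m` is the maximum cell of the set `S` with respect to the order `slt`. -/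
def IsMaxCell (slt : Finset V → Finset V → Prop) (S : Set (Cell V)) (m : Cell V) :
    Prop :=
  m ∈ S ∧ ∀ c ∈ S, c ≠ m → cslt slt c m

/-- Edge set of `G(≻ σ₀)`: the `(n-1)`-simplices strictly above `σ₀`. -/
def Egt (C : NComplex V n) (slt : Finset V → Finset V → Prop) (σ₀ : Finset V) :
    Set (Finset V) :=
  {τ | τ ∈ C.X ∧ τ.card = n ∧ slt σ₀ τ}

/-- Edge set of `G(⪰ σ₀)`. -/
def Ege (C : NComplex V n) (slt : Finset V → Finset V → Prop) (σ₀ : Finset V) :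
    Set (Finset V) :=
  {τ | τ ∈ C.X ∧ τ.card = n ∧ (τ = σ₀ ∨ slt σ₀ τ)}

/-- Edge set of `G(lev ≥ s)`. -/
def Elev (C : NComplex V n) (lev : Finset V → ℝ) (s : ℝ) : Set (Finset V) :=
  {τ | τ ∈ C.X ∧ τ.card = n ∧ s ≤ lev τ}

/-- `(τ₀, ω₀)` is a persistence pair of the order `slt`: the two `n`-cells having
`τ₀` as a face lie in distinct connected components of `G(≻ τ₀)`, and `ω₀` is the
smaller of the two maximum cells of these two components. -/
def IsPersPair (C : NComplex V n) (slt : Finset V → Finset V → Prop)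
    (τ₀ ω₀ : Finset V) : Prop :=
  τ₀ ∈ C.X ∧ τ₀.card = n ∧ ω₀ ∈ C.X ∧ ω₀.card = n + 1 ∧
  ∃ c₁ c₂ : Cell V, c₁ ≠ c₂ ∧ faceCell C τ₀ c₁ ∧ faceCell C τ₀ c₂ ∧
    c₂ ∉ KV C (Egt C slt τ₀) c₁ ∧
    ∃ m₂ : Cell V,
      IsMaxCell slt (KV C (Egt C slt τ₀) c₁) (some ω₀) ∧
      IsMaxCell slt (KV C (Egt C slt τ₀) c₂) m₂ ∧
      cslt slt (some ω₀) m₂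

/-- The optimal volume `OV(q, ω₀) = K_V(G(≻_q τ_{q,ω₀}), ω₀)`. -/
def OV (C : NComplex V n) (slt : Finset V → Finset V → Prop) (ω₀ : Finset V) :
    Set (Cell V) :=
  {c | ∃ τ, IsPersPair C slt τ ω₀ ∧ c ∈ KV C (Egt C slt τ) (some ω₀)}

/-- The stable volume `SV_ε(r, τ₀, ω₀) = K_V(G(r̂ ≥ r̂(τ₀) + ε), ω₀)`. -/
def SV (C : NComplex V n) (lev : Finset V → ℝ) (τ₀ ω₀ : Finset V) (ε : ℝ) :
    Set (Cell V) :=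
  KV C (Elev C lev (lev τ₀ + ε)) (some ω₀)

/-- `(qlev, qslt) ∈ R_ε`: an order with levels uniformly `ε/2`-close to `rlev`
satisfying the `(r, ω₀)`-order condition. -/
def InR (C : NComplex V n) (rlev : Finset V → ℝ)
    (rslt : Finset V → Finset V → Prop) (ω₀ : Finset V) (ε : ℝ)
    (qlev : Finset V → ℝ) (qslt : Finset V → Finset V → Prop) : Prop :=
  IsOWL C qlev qslt ∧ (∀ σ ∈ C.X, |qlev σ - rlev σ| < ε / 2) ∧
  (∀ σ ∈ C.X, rslt σ ω₀ → qslt σ ω₀)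

/-- `F_{ε,n}`: the `n`-simplices with level at least `lev τ₀ + ε` that precede `ω₀`. -/
def Fcells (C : NComplex V n) (lev : Finset V → ℝ)
    (slt : Finset V → Finset V → Prop) (τ₀ ω₀ : Finset V) (ε : ℝ) :
    Set (Finset V) :=
  {σ | σ ∈ C.X ∧ σ.card = n + 1 ∧ lev τ₀ + ε ≤ lev σ ∧ slt σ ω₀}

/-- `F_{ε,n-1}`: the `(n-1)`-simplices with level at least `lev τ₀ + ε` that
precede `ω₀`. -/
def Fedges (C : NComplex V n) (lev : Finset V → ℝ)
    (slt : Finset V → Finset V → Prop) (τ₀ ω₀ : Finset V) (ε : ℝ) :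
    Set (Finset V) :=
  {σ | σ ∈ C.X ∧ σ.card = n ∧ lev τ₀ + ε ≤ lev σ ∧ slt σ ω₀}

/-- `τ*(∂z)`: the `ℤ/2ℤ`-sum of the coefficients of `z` over the `n`-simplex
cofaces of `τ`. -/
def bsum (C : NComplex V n) (τ : Finset V) (z : Finset V → ZMod 2) : ZMod 2 :=
  ∑ ω ∈ C.X.filter (fun ω => ω.card = n + 1 ∧ τ ⊆ ω), z ω

/-- A feasible chain `z = ω₀ + Σ_{ω ∈ F_{ε,n}} α_ω ω` with `τ*(∂z) = 0` for all
`τ ∈ F_{ε,n-1}`. -/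
def IsFeasible (C : NComplex V n) (lev : Finset V → ℝ)
    (slt : Finset V → Finset V → Prop) (τ₀ ω₀ : Finset V) (ε : ℝ)
    (z : Finset V → ZMod 2) : Prop :=
  z ω₀ = 1 ∧
  (∀ ω : Finset V, ω ≠ ω₀ → ω ∉ Fcells C lev slt τ₀ ω₀ ε → z ω = 0) ∧
  (∀ τ ∈ Fedges C lev slt τ₀ ω₀ ε, bsum C τ z = 0)

/-- `‖z‖₀`: the number of simplices of `X` with nonzero coefficient in `z`. -/
def norm0 (C : NComplex V n) (z : Finset V → ZMod 2) : ℕ :=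
  (C.X.filter fun ω => z ω ≠ 0).card

/-- The level function of the perturbed order `q(r, η, A)`. -/
noncomputable def pertLev (C : NComplex V n) (rlev : Finset V → ℝ) (η : ℝ)
    (A : Set (Finset V)) : Finset V → ℝ :=
  fun σ => if (σ ∈ C.X ∧ σ.card = n + 1) ∨ σ ∈ A then rlev σ + η else rlev σ - η

/-- The strict order of the perturbed order `q(r, η, A)`. -/
def pertSlt (C : NComplex V n) (rlev : Finset V → ℝ)
    (rslt : Finset V → Finset V → Prop) (η : ℝ) (A : Set (Finset V)) :
    Finset V → Finset V → Prop :=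
  fun σ σ' => pertLev C rlev η A σ < pertLev C rlev η A σ' ∨
    (pertLev C rlev η A σ = pertLev C rlev η A σ' ∧ rslt σ σ')

/-- The `(n-1)`-simplices that are edges of the connected component of `c₀` in the
subgraph with edge set `E`. -/
def compEdges (C : NComplex V n) (E : Set (Finset V)) (c₀ : Cell V) :
    Set (Finset V) :=
  {τ | τ ∈ E ∧ ∃ c, faceCell C τ c ∧ c ∈ KV C E c₀}

/-- `IsPath C E c c' vs es`: `vs` is the vertex list and `es` the edge list of a walk
from `c` to `c'` in the subgraph of the dual graph with edge set `E`. -/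
inductive IsPath (C : NComplex V n) (E : Set (Finset V)) :
    Cell V → Cell V → List (Cell V) → List (Finset V) → Prop
  | nil (c : Cell V) : IsPath C E c c [c] []
  | cons {c c' c'' : Cell V} {vs : List (Cell V)} {es : List (Finset V)}
      {τ : Finset V} : τ ∈ E → faceCell C τ c → faceCell C τ c' → c ≠ c' →
      IsPath C E c' c'' vs es → IsPath C E c c'' (c :: vs) (τ :: es)

/-!
If `τ ≺ τ'`, then `G(≻ τ')` is a subgraph of `G(≻ τ)`, so a component of `G(≻ τ')` meeting the
component of `ω` in `G(≻ τ)` lies inside it. The inclusion is strict: the edge `τ'` belongs to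
`G(≻ τ)` and joins the two components of `G(≻ τ')` at `τ'`, one of which is that of `ω'`.
If `τ = τ'`, two meeting components of the same graph coincide, and then `ω` and `ω'` are both its
maximum, so `ω = ω'`.
-/

section Components

instance (C : NComplex V n) (E : Set (Finset V)) : Std.Symm (adj C E) :=
  ⟨fun _ _ ⟨τ, hτ, h, h', hne⟩ => ⟨τ, hτ, h', h, hne.symm⟩⟩

variable {C : NComplex V n}

lemma mem_KV_comm {E : Set (Finset V)} {a b : Cell V} : b ∈ KV C E a ↔ a ∈ KV C E b :=
  ⟨Std.Symm.symm _ _, Std.Symm.symm _ _⟩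

lemma KV_subset_of_mem {E : Set (Finset V)} {a b : Cell V} (h : b ∈ KV C E a) :
    KV C E b ⊆ KV C E a :=
  fun _ => h.trans

lemma KV_mono {E E' : Set (Finset V)} (hE : E ⊆ E') (a : Cell V) : KV C E a ⊆ KV C E' a :=
  fun _ => Relation.ReflTransGen.mono (fun _ _ ⟨τ, hτ, h⟩ => ⟨τ, hE hτ, h⟩) _ _

lemma KV_subset_of_inter_nonempty {E E' : Set (Finset V)} (hE : E ⊆ E') {a b : Cell V}
    (hmeet : (KV C E' a ∩ KV C E b).Nonempty) : KV C E b ⊆ KV C E' a := by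
  obtain ⟨c, hca, hcb⟩ := hmeet
  have hba : b ∈ KV C E' a := hca.trans (KV_mono hE c (mem_KV_comm.1 hcb))
  exact (KV_mono hE b).trans (KV_subset_of_mem hba)

lemma KV_eq_of_mem {E : Set (Finset V)} {a b : Cell V} (h : b ∈ KV C E a) :
    KV C E b = KV C E a :=
  (KV_subset_of_mem h).antisymm (KV_subset_of_mem (mem_KV_comm.1 h))

end Components

section PersistencePairs

variable {C : NComplex V n} {rlev : Finset V → ℝ} {slt : Finset V → Finset V → Prop}

lemma Egt_subset_of_lt (hr : IsOWL C rlev slt) {τ τ' : Finset V} (hτ : τ ∈ C.X)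
    (hτ' : τ' ∈ C.X) (hlt : slt τ τ') : Egt C slt τ' ⊆ Egt C slt τ :=
  fun _ ⟨he, hcard, hlt'⟩ => ⟨he, hcard, hr.2.2.1 τ hτ τ' hτ' _ he hlt hlt'⟩

lemma IsMaxCell.some_unique (hr : IsOWL C rlev slt) {S : Set (Cell V)} {ω ω' : Finset V}
    (hω : ω ∈ C.X) (hω' : ω' ∈ C.X) (h : IsMaxCell slt S (some ω))
    (h' : IsMaxCell slt S (some ω')) : ω = ω' := by
  by_contra hne
  have hlt : slt ω ω' := h'.2 _ h.1 (by simpa using hne)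
  have hgt : slt ω' ω := h.2 _ h'.1 (by simpa using Ne.symm hne)
  exact hr.2.1 ω hω (hr.2.2.1 ω hω ω' hω' ω hω hlt hgt)

lemma IsPersPair.isMaxCell_KV {τ ω : Finset V} (hp : IsPersPair C slt τ ω) :
    IsMaxCell slt (KV C (Egt C slt τ) (some ω)) (some ω) := by
  obtain ⟨-, -, -, -, c₁, -, -, -, -, -, -, hmax, -⟩ := hp
  rwa [KV_eq_of_mem hmax.1]

lemma IsPersPair.eq_of_inter_nonempty (hr : IsOWL C rlev slt) {τ ω ω' : Finset V}
    (hp : IsPersPair C slt τ ω) (hp' : IsPersPair C slt τ ω')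
    (hmeet : (KV C (Egt C slt τ) (some ω) ∩ KV C (Egt C slt τ) (some ω')).Nonempty) :
    ω = ω' := by
  have hsame : KV C (Egt C slt τ) (some ω') = KV C (Egt C slt τ) (some ω) :=
    (KV_subset_of_inter_nonempty le_rfl hmeet).antisymm
      (KV_subset_of_inter_nonempty le_rfl (by rwa [Set.inter_comm]))
  have hmax' := hp'.isMaxCell_KV
  rw [hsame] at hmax'
  exact IsMaxCell.some_unique hr hp.2.2.1 hp'.2.2.1 hp.isMaxCell_KV hmax'

lemma IsPersPair.KV_ssubset_of_lt (hr : IsOWL C rlev slt) {τ ω τ' ω' : Finset V}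
    (hp : IsPersPair C slt τ ω) (hp' : IsPersPair C slt τ' ω') (hlt : slt τ τ')
    (hmeet : (KV C (Egt C slt τ) (some ω) ∩ KV C (Egt C slt τ') (some ω')).Nonempty) :
    KV C (Egt C slt τ') (some ω') ⊂ KV C (Egt C slt τ) (some ω) := by
  obtain ⟨hτ', hcard, -, -, c₁, c₂, hc, hf₁, hf₂, hsep, -, hmax, -⟩ := hp'
  have hsub := KV_subset_of_inter_nonempty (Egt_subset_of_lt hr hp.1 hτ' hlt) hmeet
  refine ⟨hsub, fun hsup => hsep ?_⟩
  have hc₁ : c₁ ∈ KV C (Egt C slt τ') (some ω') := mem_KV_comm.1 hmax.1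
  have hc₂ : c₂ ∈ KV C (Egt C slt τ) (some ω) :=
    (hsub hc₁).tail ⟨τ', ⟨hτ', hcard, hlt⟩, hf₁, hf₂, hc⟩
  exact hmax.1.trans (hsup hc₂)

end PersistencePairs

theorem optimal_volumes_nested_general
    (C : NComplex V n)
    (rlev : Finset V → ℝ) (rslt : Finset V → Finset V → Prop)
    (hr : IsOWL C rlev rslt)
    (τ ω τ' ω' : Finset V)
    (hp : IsPersPair C rslt τ ω) (hp' : IsPersPair C rslt τ' ω')
    (hne : (τ, ω) ≠ (τ', ω')) :
    KV C (Egt C rslt τ) (some ω) ∩ KV C (Egt C rslt τ') (some ω') = ∅ ∨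
    KV C (Egt C rslt τ) (some ω) ⊂ KV C (Egt C rslt τ') (some ω') ∨
    KV C (Egt C rslt τ') (some ω') ⊂ KV C (Egt C rslt τ) (some ω) := by
  rcases (KV C (Egt C rslt τ) (some ω) ∩ KV C (Egt C rslt τ') (some ω')).eq_empty_or_nonempty
    with hdisj | hmeet
  · exact Or.inl hdisj
  right
  rcases eq_or_ne τ τ' with rfl | hττ'
  · exact absurd (by rw [hp.eq_of_inter_nonempty hr hp' hmeet]) hne
  rcases hr.2.2.2.1 τ hp.1 τ' hp'.1 hττ' with hlt | hlt
  · exact Or.inr (hp.KV_ssubset_of_lt hr hp' hlt hmeet)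
  · exact Or.inl (hp'.KV_ssubset_of_lt hr hp hlt (by rwa [Set.inter_comm]))

/-- Theorem 2.6, graph-theoretic form: optimal volumes of distinct
persistence pairs are nested or disjoint. -/
theorem optimal_volumes_nested
    (hn : 2 ≤ n) (C : NComplex V n) (htwo : TwoCofaces C) (hconn : DualConn C)
    (rlev : Finset V → ℝ) (rslt : Finset V → Finset V → Prop)
    (hr : IsOWL C rlev rslt)
    (τ ω τ' ω' : Finset V)
    (hp : IsPersPair C rslt τ ω) (hp' : IsPersPair C rslt τ' ω')
    (hne : (τ, ω) ≠ (τ', ω')) :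
    KV C (Egt C rslt τ) (some ω) ∩ KV C (Egt C rslt τ') (some ω') = ∅ ∨
    KV C (Egt C rslt τ) (some ω) ⊂ KV C (Egt C rslt τ') (some ω') ∨
    KV C (Egt C rslt τ') (some ω') ⊂ KV C (Egt C rslt τ) (some ω) :=
  optimal_volumes_nested_general C rlev rslt hr τ ω τ' ω' hp hp' hne

end StableVol
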